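/- Let A_1, ..., A_n be i.i.d. real random variables with finite second moment, and let Ã_1 ≥ ... ≥ Ã_n be their descending order statistics. Then for any 1 ≤ u < v ≤ n, Cov(Ã_u, Ã_v) ≥ 0. -/

import Mathlib

open MeasureTheory ProbabilityTheory

section OrderStat

variable {n : ℕ}

lemma sortStat_le_iff (x : Fin n → ℝ) (k : Fin n) (t : ℝ) :
    x (Tuple.sort x k) ≤ t ↔ (k : ℕ) + 1 ≤ (Finset.univ.filter fun i => x i ≤ t).card := by
  set σ := Tuple.sort x with hσ
  have hcard : (Finset.univ.filter fun i => x i ≤ t).card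
      = (Finset.univ.filter fun j => x (σ j) ≤ t).card := by
    have himg : (Finset.univ.filter fun i => x i ≤ t)
        = (Finset.univ.filter fun j => x (σ j) ≤ t).image σ := by
      ext i
      simp only [Finset.mem_image, Finset.mem_filter, Finset.mem_univ, true_and]
      constructor
      · intro hi; exact ⟨σ.symm i, by simpa using hi, by simp⟩
      · rintro ⟨j, hj, rfl⟩; exact hj
    rw [himg, Finset.card_image_of_injective _ σ.injective]
  rw [hcard]
  constructor
  · intro h
    have hsub : Finset.Iic k ⊆ Finset.univ.filter fun j => x (σ j) ≤ t := by
      intro j hj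
      simp only [Finset.mem_filter, Finset.mem_univ, true_and]
      exact le_trans (Tuple.monotone_sort x (Finset.mem_Iic.mp hj)) h
    calc (k : ℕ) + 1 = (Finset.Iic k).card := (Fin.card_Iic k).symm
    _ ≤ _ := Finset.card_le_card hsub
  · intro h
    by_contra hc
    push_neg at hc
    have hsub : (Finset.univ.filter fun j => x (σ j) ≤ t) ⊆ Finset.Iio k := by
      intro j hj
      simp only [Finset.mem_filter, Finset.mem_univ, true_and] at hj
      rw [Finset.mem_Iio]
      by_contra hjk
      push_neg at hjk
      exact absurd (le_trans (Tuple.monotone_sort x hjk) hj) (not_le.mpr hc)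
    have := Finset.card_le_card hsub
    rw [Fin.card_Iio] at this
    omega

lemma sortStat_monotone (k : Fin n) :
    Monotone (fun x : Fin n → ℝ => x (Tuple.sort x k)) := by
  intro x y hxy
  simp only
  rw [sortStat_le_iff]
  refine le_trans ((sortStat_le_iff y k _).mp le_rfl) (Finset.card_le_card ?_)
  intro i hi
  simp only [Finset.mem_filter, Finset.mem_univ, true_and] at hi ⊢
  exact le_trans (hxy i) hi

lemma sortStat_measurable (k : Fin n) :
    Measurable (fun x : Fin n → ℝ => x (Tuple.sort x k)) := by
  apply measurable_of_Iic
  intro t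
  have : (fun x : Fin n → ℝ => x (Tuple.sort x k)) ⁻¹' Set.Iic t
      = {x : Fin n → ℝ | (k : ℕ) + 1 ≤ (Finset.univ.filter fun i => x i ≤ t).card} := by
    ext x; simp [Set.mem_preimage, sortStat_le_iff]
  rw [this]
  have hcount : Measurable (fun x : Fin n → ℝ => (Finset.univ.filter fun i => x i ≤ t).card) := by
    simp_rw [Finset.card_filter]
    apply Finset.measurable_sum
    intro i _
    exact Measurable.ite ((measurable_pi_apply i) measurableSet_Iic) measurable_const
      measurable_const
  exact hcount measurableSet_Ici

end OrderStat

section Harris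

variable {α β : Type*} [MeasurableSpace α] [MeasurableSpace β]

lemma memL2_mul_integrable {μ : Measure α} {f g : α → ℝ}
    (hf : MemLp f 2 μ) (hg : MemLp g 2 μ) : Integrable (fun x => f x * g x) μ := by
  haveI : ENNReal.HolderTriple 2 2 1 := ⟨by rw [inv_one, ENNReal.inv_two_add_inv_two]⟩
  have h := hf.smul (φ := g) hg (p := 2) (q := 2) (r := 1)
  rw [memLp_one_iff_integrable] at h
  simpa [smul_eq_mul, mul_comm] using (show Integrable (fun x => g x • f x) μ from h)

lemma chebyshev_dup {ν : Measure α} [IsProbabilityMeasure ν] {F G : α → ℝ}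
    (hF : MemLp F 2 ν) (hG : MemLp G 2 ν)
    (h : ∀ᵐ p ∂(ν.prod ν), 0 ≤ (F p.1 - F p.2) * (G p.1 - G p.2)) :
    (∫ x, F x ∂ν) * (∫ x, G x ∂ν) ≤ ∫ x, F x * G x ∂ν := by
  have hFG : Integrable (fun x => F x * G x) ν := memL2_mul_integrable hF hG
  have hFi : Integrable F ν := hF.integrable (by norm_num)
  have hGi : Integrable G ν := hG.integrable (by norm_num)
  have hmp1 : MeasurePreserving (Prod.fst : α × α → α) (ν.prod ν) ν :=
    ⟨measurable_fst, by simp⟩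
  have hmp2 : MeasurePreserving (Prod.snd : α × α → α) (ν.prod ν) ν :=
    ⟨measurable_snd, by simp⟩
  have h11 : Integrable (fun p : α × α => F p.1 * G p.1) (ν.prod ν) :=
    (hmp1.integrable_comp hFG.1).mpr hFG
  have h22 : Integrable (fun p : α × α => F p.2 * G p.2) (ν.prod ν) :=
    (hmp2.integrable_comp hFG.1).mpr hFG
  have h12 : Integrable (fun p : α × α => F p.1 * G p.2) (ν.prod ν) := hFi.mul_prod hGi
  have h21 : Integrable (fun p : α × α => G p.1 * F p.2) (ν.prod ν) := hGi.mul_prod hFi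
  have hA : Integrable (fun p : α × α => F p.1 * G p.1 - F p.1 * G p.2) (ν.prod ν) := by
    exact h11.sub h12
  have hB : Integrable (fun p : α × α => F p.1 * G p.1 - F p.1 * G p.2 - G p.1 * F p.2)
      (ν.prod ν) := by exact hA.sub h21
  have key : 0 ≤ ∫ p, (F p.1 - F p.2) * (G p.1 - G p.2) ∂(ν.prod ν) :=
    integral_nonneg_of_ae h
  have expand : (fun p : α × α => (F p.1 - F p.2) * (G p.1 - G p.2))
      = fun p => F p.1 * G p.1 - F p.1 * G p.2 - G p.1 * F p.2 + F p.2 * G p.2 := by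
    funext p; ring
  rw [expand, integral_add hB h22, integral_sub hA h21, integral_sub h11 h12] at key
  have e11 : ∫ p : α × α, F p.1 * G p.1 ∂(ν.prod ν) = ∫ x, F x * G x ∂ν := by
    rw [integral_prod _ h11]; simp
  have e22 : ∫ p : α × α, F p.2 * G p.2 ∂(ν.prod ν) = ∫ x, F x * G x ∂ν := by
    rw [integral_prod _ h22]; simp
  have e12 : ∫ p : α × α, F p.1 * G p.2 ∂(ν.prod ν) = (∫ x, F x ∂ν) * ∫ x, G x ∂ν :=
    integral_prod_mul F G
  have e21 : ∫ p : α × α, G p.1 * F p.2 ∂(ν.prod ν) = (∫ x, G x ∂ν) * ∫ x, F x ∂ν :=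
    integral_prod_mul G F
  rw [e11, e22, e12, e21] at key
  nlinarith [key]

lemma harris_step [LinearOrder α] [Preorder β]
    (ν : Measure α) [IsProbabilityMeasure ν] (π : Measure β) [IsProbabilityMeasure π]
    {f g : α × β → ℝ} (hfm : Measurable f) (hgm : Measurable g)
    (hfmono : Monotone f) (hgmono : Monotone g)
    (hf2 : MemLp f 2 (ν.prod π)) (hg2 : MemLp g 2 (ν.prod π))
    (hslice : ∀ᵐ t ∂ν, (∫ y, f (t, y) ∂π) * (∫ y, g (t, y) ∂π) ≤ ∫ y, f (t, y) * g (t, y) ∂π) :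
    (∫ p, f p ∂(ν.prod π)) * (∫ p, g p ∂(ν.prod π)) ≤ ∫ p, f p * g p ∂(ν.prod π) := by
  have hfg_int : Integrable (fun p => f p * g p) (ν.prod π) := memL2_mul_integrable hf2 hg2
  have hfi : Integrable f (ν.prod π) := hf2.integrable (by norm_num)
  have hgi : Integrable g (ν.prod π) := hg2.integrable (by norm_num)
  set F : α → ℝ := fun t => ∫ y, f (t, y) ∂π with hF_def
  set G : α → ℝ := fun t => ∫ y, g (t, y) ∂π with hG_def
  have hFsm : StronglyMeasurable F := hfm.stronglyMeasurable.integral_prod_right'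
  have hGsm : StronglyMeasurable G := hgm.stronglyMeasurable.integral_prod_right'
  -- slice L2 membership
  have hfsq : Integrable (fun p => f p ^ 2) (ν.prod π) := hf2.integrable_sq
  have hgsq : Integrable (fun p => g p ^ 2) (ν.prod π) := hg2.integrable_sq
  have hf_sl2 : ∀ᵐ t ∂ν, MemLp (fun y => f (t, y)) 2 π := by
    filter_upwards [hfsq.prod_right_ae] with t ht
    exact (memLp_two_iff_integrable_sq
      ((hfm.comp measurable_prodMk_left).aestronglyMeasurable)).mpr ht
  have hg_sl2 : ∀ᵐ t ∂ν, MemLp (fun y => g (t, y)) 2 π := by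
    filter_upwards [hgsq.prod_right_ae] with t ht
    exact (memLp_two_iff_integrable_sq
      ((hgm.comp measurable_prodMk_left).aestronglyMeasurable)).mpr ht
  -- F, G ∈ L2
  have hFsq_bound : ∀ᵐ t ∂ν, ‖F t ^ 2‖ ≤ ∫ y, f (t, y) ^ 2 ∂π := by
    filter_upwards [hf_sl2] with t ht
    have hv := variance_nonneg (fun y => f (t, y)) π
    rw [variance_eq_sub ht] at hv
    have : F t ^ 2 ≤ ∫ y, f (t, y) ^ 2 ∂π := by simpa [hF_def] using hv
    calc ‖F t ^ 2‖ = F t ^ 2 := by rw [Real.norm_eq_abs, abs_of_nonneg (sq_nonneg _)]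
    _ ≤ _ := this
  have hGsq_bound : ∀ᵐ t ∂ν, ‖G t ^ 2‖ ≤ ∫ y, g (t, y) ^ 2 ∂π := by
    filter_upwards [hg_sl2] with t ht
    have hv := variance_nonneg (fun y => g (t, y)) π
    rw [variance_eq_sub ht] at hv
    have : G t ^ 2 ≤ ∫ y, g (t, y) ^ 2 ∂π := by simpa [hG_def] using hv
    calc ‖G t ^ 2‖ = G t ^ 2 := by rw [Real.norm_eq_abs, abs_of_nonneg (sq_nonneg _)]
    _ ≤ _ := this
  have hF2 : MemLp F 2 ν := by
    refine (memLp_two_iff_integrable_sq hFsm.aestronglyMeasurable).mpr ?_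
    exact Integrable.mono' hfsq.integral_prod_left
      ((hFsm.pow 2).aestronglyMeasurable) hFsq_bound
  have hG2 : MemLp G 2 ν := by
    refine (memLp_two_iff_integrable_sq hGsm.aestronglyMeasurable).mpr ?_
    exact Integrable.mono' hgsq.integral_prod_left
      ((hGsm.pow 2).aestronglyMeasurable) hGsq_bound
  -- a.e. monotone comparison on the square
  have hf_sl_int : ∀ᵐ t ∂ν, Integrable (fun y => f (t, y)) π := hfi.prod_right_ae
  have hg_sl_int : ∀ᵐ t ∂ν, Integrable (fun y => g (t, y)) π := hgi.prod_right_ae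
  have hdup : ∀ᵐ p ∂(ν.prod ν), 0 ≤ (F p.1 - F p.2) * (G p.1 - G p.2) := by
    rw [MeasureTheory.Measure.ae_prod_iff_ae_ae]
    · filter_upwards [hf_sl_int, hg_sl_int] with s hfs hgs
      filter_upwards [hf_sl_int, hg_sl_int] with t hft hgt
      have key : ∀ s' t' : α, s' ≤ t' →
          Integrable (fun y => f (s', y)) π → Integrable (fun y => f (t', y)) π →
          Integrable (fun y => g (s', y)) π → Integrable (fun y => g (t', y)) π →
          F s' ≤ F t' ∧ G s' ≤ G t' := by
        intro s' t' hst h1 h2 h3 h4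
        constructor
        · exact integral_mono h1 h2 fun y => hfmono (Prod.mk_le_mk.mpr ⟨hst, le_rfl⟩)
        · exact integral_mono h3 h4 fun y => hgmono (Prod.mk_le_mk.mpr ⟨hst, le_rfl⟩)
      rcases le_total s t with hst | hst
      · obtain ⟨h1, h2⟩ := key s t hst hfs hft hgs hgt
        nlinarith
      · obtain ⟨h1, h2⟩ := key t s hst hft hfs hgt hgs
        nlinarith
    · have hm : Measurable fun p : α × α => (F p.1 - F p.2) * (G p.1 - G p.2) :=
        ((hFsm.measurable.comp measurable_fst).sub
          (hFsm.measurable.comp measurable_snd)).mul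
          ((hGsm.measurable.comp measurable_fst).sub (hGsm.measurable.comp measurable_snd))
      exact measurableSet_le measurable_const hm
  -- assemble
  have cheb := chebyshev_dup hF2 hG2 hdup
  have hFG_int : Integrable (fun t => F t * G t) ν := memL2_mul_integrable hF2 hG2
  have hinner_int : Integrable (fun t => ∫ y, f (t, y) * g (t, y) ∂π) ν :=
    hfg_int.integral_prod_left
  have step2 : ∫ t, F t * G t ∂ν ≤ ∫ t, (∫ y, f (t, y) * g (t, y) ∂π) ∂ν :=
    integral_mono_ae hFG_int hinner_int hslice
  have ef : ∫ p, f p ∂(ν.prod π) = ∫ t, F t ∂ν := integral_prod f hfi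
  have eg : ∫ p, g p ∂(ν.prod π) = ∫ t, G t ∂ν := integral_prod g hgi
  have efg : ∫ p, f p * g p ∂(ν.prod π) = ∫ t, (∫ y, f (t, y) * g (t, y) ∂π) ∂ν :=
    integral_prod _ hfg_int
  rw [ef, eg, efg]
  exact le_trans cheb step2

lemma harris : ∀ (n : ℕ) (μ : Fin n → Measure ℝ), (∀ i, IsProbabilityMeasure (μ i)) →
    ∀ f g : (Fin n → ℝ) → ℝ, Measurable f → Measurable g → Monotone f → Monotone g →
    MemLp f 2 (Measure.pi μ) → MemLp g 2 (Measure.pi μ) →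
    (∫ x, f x ∂Measure.pi μ) * (∫ x, g x ∂Measure.pi μ) ≤ ∫ x, f x * g x ∂Measure.pi μ := by
  intro n
  induction n with
  | zero =>
    intro μ hμ f g hfm hgm _ _ _ _
    rw [Measure.pi_of_empty]
    rw [integral_dirac' f _ hfm.stronglyMeasurable, integral_dirac' g _ hgm.stronglyMeasurable,
      integral_dirac' (fun x => f x * g x) _ (hfm.mul hgm).stronglyMeasurable]
  | succ n ih =>
    intro μ hμ f g hfm hgm hfmono hgmono hf2 hg2
    haveI : ∀ i, IsProbabilityMeasure (μ i) := hμ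
    set ν := μ 0 with hν
    set π' := Measure.pi (fun j : Fin n => μ (Fin.succAbove 0 j)) with hπ'
    set e := MeasurableEquiv.piFinSuccAbove (fun _ : Fin (n + 1) => ℝ) 0 with he
    have hmp : MeasurePreserving e (Measure.pi μ) (ν.prod π') :=
      measurePreserving_piFinSuccAbove μ 0
    have hesymm : ∀ p : ℝ × (Fin n → ℝ), (e.symm p : Fin (n + 1) → ℝ) = Fin.cons p.1 p.2 := by
      intro p
      rw [he]
      simp [MeasurableEquiv.piFinSuccAbove_symm_apply, Fin.insertNthEquiv, Fin.insertNth_zero]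
    have hsymm_mono : Monotone (fun p : ℝ × (Fin n → ℝ) => (e.symm p : Fin (n + 1) → ℝ)) := by
      intro p q hpq
      show e.symm p ≤ e.symm q
      rw [hesymm, hesymm]
      intro j
      induction j using Fin.cases with
      | zero => simpa using hpq.1
      | succ j => simpa using hpq.2 j
    set f' : ℝ × (Fin n → ℝ) → ℝ := fun p => f (e.symm p) with hf'
    set g' : ℝ × (Fin n → ℝ) → ℝ := fun p => g (e.symm p) with hg'
    have hf'm : Measurable f' := hfm.comp e.symm.measurable
    have hg'm : Measurable g' := hgm.comp e.symm.measurable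
    have hf'mono : Monotone f' := fun p q hpq => hfmono (hsymm_mono hpq)
    have hg'mono : Monotone g' := fun p q hpq => hgmono (hsymm_mono hpq)
    have hmap : Measure.map e.symm (ν.prod π') = Measure.pi μ := (MeasurePreserving.symm e hmp).map_eq
    have hf'2 : MemLp f' 2 (ν.prod π') := by
      have h1 : MemLp f 2 (Measure.map e.symm (ν.prod π')) := hmap ▸ hf2
      exact (memLp_map_measure_iff h1.aestronglyMeasurable
        e.symm.measurable.aemeasurable).mp h1
    have hg'2 : MemLp g' 2 (ν.prod π') := by
      have h1 : MemLp g 2 (Measure.map e.symm (ν.prod π')) := hmap ▸ hg2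
      exact (memLp_map_measure_iff h1.aestronglyMeasurable
        e.symm.measurable.aemeasurable).mp h1
    have hslice : ∀ᵐ t ∂ν, (∫ y, f' (t, y) ∂π') * (∫ y, g' (t, y) ∂π')
        ≤ ∫ y, f' (t, y) * g' (t, y) ∂π' := by
      filter_upwards [hf'2.integrable_sq.prod_right_ae, hg'2.integrable_sq.prod_right_ae]
        with t htf htg
      exact ih (fun j => μ (Fin.succAbove 0 j)) (fun j => hμ _)
        (fun y => f' (t, y)) (fun y => g' (t, y))
        (hf'm.comp measurable_prodMk_left) (hg'm.comp measurable_prodMk_left)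
        (fun y y' h => hf'mono (Prod.mk_le_mk.mpr ⟨le_rfl, h⟩))
        (fun y y' h => hg'mono (Prod.mk_le_mk.mpr ⟨le_rfl, h⟩))
        ((memLp_two_iff_integrable_sq
          ((hf'm.comp measurable_prodMk_left).aestronglyMeasurable)).mpr htf)
        ((memLp_two_iff_integrable_sq
          ((hg'm.comp measurable_prodMk_left).aestronglyMeasurable)).mpr htg)
    have main := harris_step ν π' hf'm hg'm hf'mono hg'mono hf'2 hg'2 hslice
    have ef : ∫ p, f' p ∂(ν.prod π') = ∫ x, f x ∂Measure.pi μ := (MeasurePreserving.symm e hmp).integral_comp' f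
    have eg : ∫ p, g' p ∂(ν.prod π') = ∫ x, g x ∂Measure.pi μ := (MeasurePreserving.symm e hmp).integral_comp' g
    have efg : ∫ p, f' p * g' p ∂(ν.prod π') = ∫ x, f x * g x ∂Measure.pi μ :=
      (MeasurePreserving.symm e hmp).integral_comp' (fun x => f x * g x)
    rw [← ef, ← eg, ← efg]
    exact main

lemma map_eq_pi {Ω : Type*} [MeasurableSpace Ω] (P : Measure Ω) [IsProbabilityMeasure P]
    {n : ℕ} (A : Fin n → Ω → ℝ) (hmeas : ∀ i, Measurable (A i))
    (hindep : iIndepFun A P) :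
    Measure.map (fun ω (i : Fin n) => A i ω) P = Measure.pi (fun i => P.map (A i)) := by
  haveI : ∀ i, IsProbabilityMeasure (P.map (A i)) :=
    fun i => Measure.isProbabilityMeasure_map (hmeas i).aemeasurable
  refine (Measure.pi_eq fun s hs => ?_).symm
  rw [Measure.map_apply (measurable_pi_lambda _ fun i => hmeas i) (MeasurableSet.univ_pi hs)]
  have hpre : (fun ω (i : Fin n) => A i ω) ⁻¹' Set.pi Set.univ s
      = ⋂ i ∈ Finset.univ, A i ⁻¹' s i := by
    ext ω; simp [Set.mem_pi]
  rw [hpre, hindep.measure_inter_preimage_eq_mul Finset.univ (fun i _ => hs i)]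
  exact Finset.prod_congr rfl fun i _ => (Measure.map_apply (hmeas i) (hs i)).symm

end Harris

/-- Bickel's theorem: for i.i.d. real random variables `A_1, ..., A_n` with finite second
moment, any two descending order statistics `Ã_u, Ã_v` (`u < v`) have nonnegative
covariance: `E[Ã_u Ã_v] - E[Ã_u] E[Ã_v] ≥ 0`. -/
theorem stmt7 {Ω : Type*} [MeasurableSpace Ω] (P : Measure Ω) [IsProbabilityMeasure P]
    (n : ℕ) (A : Fin n → Ω → ℝ)
    (hmeas : ∀ i, Measurable (A i))
    (hindep : iIndepFun A P)
    (hident : ∀ i j, Measure.map (A i) P = Measure.map (A j) P)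
    (hL2 : ∀ i, MemLp (A i) 2 P)
    (X : Fin n → Ω → ℝ)
    (hX : ∀ (k : Fin n) (ω : Ω), X k ω = A (Tuple.sort (fun i => A i ω) k.rev) ω)
    (u v : Fin n) (huv : u < v) :
    0 ≤ (∫ ω, X u ω * X v ω ∂P) - (∫ ω, X u ω ∂P) * (∫ ω, X v ω ∂P) := by
  haveI : ∀ i, IsProbabilityMeasure (P.map (A i)) :=
    fun i => Measure.isProbabilityMeasure_map (hmeas i).aemeasurable
  set T : Ω → Fin n → ℝ := fun ω i => A i ω with hT_def
  have hT : Measurable T := measurable_pi_lambda _ fun i => hmeas i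
  have hmapT : P.map T = Measure.pi (fun i => P.map (A i)) := map_eq_pi P A hmeas hindep
  set gx : Fin n → (Fin n → ℝ) → ℝ := fun k x => x (Tuple.sort x k) with hgx_def
  have hXeq : ∀ k : Fin n, X k = fun ω => gx k.rev (T ω) := by
    intro k; funext ω; rw [hX k ω]
  -- L2 bounds
  have hsum : MemLp (fun ω => ∑ i, |A i ω|) 2 P := by
    apply memLp_finset_sum
    intro i _
    exact (hL2 i).norm
  have hgT2 : ∀ k : Fin n, MemLp (fun ω => gx k (T ω)) 2 P := by
    intro k
    refine MemLp.of_le hsum ((sortStat_measurable k).comp hT).aestronglyMeasurable ?_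
    filter_upwards with ω
    have h1 : |gx k (T ω)| ≤ ∑ i, |A i ω| := by
      have : |T ω (Tuple.sort (T ω) k)| ≤ ∑ i, |T ω i| :=
        Finset.single_le_sum (f := fun i => |T ω i|) (fun i _ => abs_nonneg _)
          (Finset.mem_univ _)
      simpa [hgx_def] using this
    have h2 : (0 : ℝ) ≤ ∑ i, |A i ω| := Finset.sum_nonneg fun i _ => abs_nonneg _
    simpa [Real.norm_eq_abs, abs_of_nonneg h2] using h1
  have hg2 : ∀ k : Fin n, MemLp (gx k) 2 (Measure.pi (fun i => P.map (A i))) := by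
    intro k
    rw [← hmapT]
    refine (memLp_map_measure_iff ?_ hT.aemeasurable).mpr (hgT2 k)
    rw [hmapT]
    exact (sortStat_measurable k).aestronglyMeasurable
  -- transfer integrals
  have hint : ∀ h : (Fin n → ℝ) → ℝ, Measurable h →
      ∫ x, h x ∂Measure.pi (fun i => P.map (A i)) = ∫ ω, h (T ω) ∂P := by
    intro h hh
    rw [← hmapT, integral_map hT.aemeasurable]
    rw [hmapT]
    exact hh.aestronglyMeasurable
  have euv : ∫ ω, X u ω * X v ω ∂P
      = ∫ x, gx u.rev x * gx v.rev x ∂Measure.pi (fun i => P.map (A i)) := by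
    rw [hint (fun x => gx u.rev x * gx v.rev x) ((sortStat_measurable u.rev).mul (sortStat_measurable v.rev))]
    simp only [hXeq]
  have eu : ∫ ω, X u ω ∂P = ∫ x, gx u.rev x ∂Measure.pi (fun i => P.map (A i)) := by
    rw [hint _ (sortStat_measurable u.rev)]; simp only [hXeq, hgx_def]
  have ev : ∫ ω, X v ω ∂P = ∫ x, gx v.rev x ∂Measure.pi (fun i => P.map (A i)) := by
    rw [hint _ (sortStat_measurable v.rev)]; simp only [hXeq, hgx_def]
  rw [euv, eu, ev, sub_nonneg]
  exact harris n _ (fun i => inferInstance) _ _ (sortStat_measurable u.rev)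
    (sortStat_measurable v.rev) (sortStat_monotone u.rev) (sortStat_monotone v.rev)
    (hg2 u.rev) (hg2 v.rev)
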